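/- For any real β, ω, Hermitian H, and matrix A with ‖A‖ ≤ 1, the operator norm of the imaginary-time-conjugated operator Fourier transform obeys ‖e^{βH} Â_H(ω) e^{-βH}‖ ≤ e^{σ²β²} e^{βω} / √(σ√(2π)). -/

import Mathlib

/-!
In an eigenbasis of `H` (eigenvalues `λⱼ`), conjugation by `e^{zH}` multiplies the `(j, k)` entry
by `e^{z(λⱼ - λₖ)}`. Hence `Â_H(ω)` has entries `(2π)^{-1/2} f̂(ω - (λⱼ - λₖ)) Aⱼₖ`, where
`f̂(ξ) ∝ e^{-ξ²/(4σ²)}` is the Fourier transform of the Gaussian weight, and completing the square,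
`e^{βν} f̂(ω - ν) = e^{σ²β² + βω} f̂(ω + 2σ²β - ν)`, gives
`e^{βH} Â_H(ω) e^{-βH} = e^{σ²β² + βω} Â_H(ω + 2σ²β)`. Since `e^{itH}` is unitary,
`‖Â_H(ω')‖ ≤ (2π)^{-1/2} ‖A‖ ∫ f = ‖A‖ / √(σ√(2π))`.
-/

open scoped Matrix.Norms.L2Operator

open Matrix Complex Real MeasureTheory

/-- The Gaussian weight `f(t) = e^{-σ²t²} √(σ√(2/π))`. -/
noncomputable def gaussWeight (σ t : ℝ) : ℝ :=
  Real.exp (-(σ ^ 2 * t ^ 2)) * Real.sqrt (σ * Real.sqrt (2 / π))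

/-- The operator Fourier transform
`Â_H(ω) = (2π)^{-1/2} ∫ e^{iHt} A e^{-iHt} e^{-iωt} f(t) dt` with Gaussian width `σ`. -/
noncomputable def oftInt {m : ℕ} (H A : Matrix (Fin m) (Fin m) ℂ) (σ ω : ℝ) :
    Matrix (Fin m) (Fin m) ℂ :=
  ((Real.sqrt (2 * π) : ℂ))⁻¹ •
    ∫ t : ℝ, (Complex.exp (-(I * ω * t)) * (gaussWeight σ t : ℂ)) •
      (NormedSpace.exp ((I * t) • H) * A * NormedSpace.exp ((-(I * t)) • H))

namespace Matrix.IsHermitian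

variable {n : Type*} [Fintype n] [DecidableEq n] {H : Matrix n n ℂ}

noncomputable def toEigenbasis (hH : H.IsHermitian) : Matrix n n ℂ ≃⋆ₐ[ℂ] Matrix n n ℂ :=
  Unitary.conjStarAlgAut ℂ _ (star hH.eigenvectorUnitary)

lemma toEigenbasis_apply (hH : H.IsHermitian) (X : Matrix n n ℂ) :
    hH.toEigenbasis X = star (hH.eigenvectorUnitary : Matrix n n ℂ) * X * hH.eigenvectorUnitary :=
  Unitary.conjStarAlgAut_star_apply _ _

lemma toEigenbasis_exp_smul (hH : H.IsHermitian) (z : ℂ) :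
    hH.toEigenbasis (NormedSpace.exp (z • H)) =
      diagonal fun i => Complex.exp (z * hH.eigenvalues i) := by
  let _ : NormedAlgebra ℚ (Matrix n n ℂ) := .restrictScalars ℚ ℂ _
  have hcont : Continuous hH.toEigenbasis := by
    rw [funext hH.toEigenbasis_apply]
    fun_prop
  rw [NormedSpace.map_exp _ hcont, map_smul, toEigenbasis,
    conjStarAlgAut_star_eigenvectorUnitary, ← diagonal_smul, exp_diagonal]
  congr 1
  funext i
  simp [Complex.exp_eq_exp_ℂ]

lemma toEigenbasis_exp_smul_mul_mul_exp_neg_smul (hH : H.IsHermitian) (z : ℂ) (X : Matrix n n ℂ) :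
    hH.toEigenbasis (NormedSpace.exp (z • H) * X * NormedSpace.exp ((-z) • H)) =
      of fun j k => Complex.exp (z * (hH.eigenvalues j - hH.eigenvalues k)) *
        hH.toEigenbasis X j k := by
  ext j k
  rw [map_mul, map_mul, toEigenbasis_exp_smul, toEigenbasis_exp_smul, mul_diagonal,
    diagonal_mul, of_apply, mul_comm, ← mul_assoc, ← Complex.exp_add]
  congr 2
  ring

lemma exp_I_mul_smul_mem_unitary (hH : H.IsHermitian) (t : ℝ) :
    NormedSpace.exp ((I * t) • H) ∈ unitary (Matrix n n ℂ) := by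
  let _ : NormedAlgebra ℚ (Matrix n n ℂ) := .restrictScalars ℚ ℂ _
  refine NormedSpace.exp_mem_unitary_of_mem_skewAdjoint (hH.isSelfAdjoint.smul_mem_skewAdjoint ?_)
  simp [skewAdjoint.mem_iff, Complex.conj_ofReal]

lemma norm_exp_I_mul_smul_mul_mul_exp_neg (hH : H.IsHermitian) (t : ℝ) (X : Matrix n n ℂ) :
    ‖NormedSpace.exp ((I * t) • H) * X * NormedSpace.exp ((-(I * t)) • H)‖ = ‖X‖ := by
  have hneg : -(I * t) = I * (-t : ℝ) := by push_cast; ring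
  rw [hneg, CStarRing.norm_mul_mem_unitary _ (hH.exp_I_mul_smul_mem_unitary _),
    CStarRing.norm_mem_unitary_mul _ (hH.exp_I_mul_smul_mem_unitary _)]

end Matrix.IsHermitian

noncomputable def gaussWeightFourier (σ ξ : ℝ) : ℂ :=
  ∫ t : ℝ, Complex.exp (-(I * ξ * t)) * (gaussWeight σ t : ℂ)

section GaussWeight

variable {σ : ℝ}

lemma integrable_gaussWeight (hσ : σ ≠ 0) : Integrable (gaussWeight σ) := by
  refine ((integrable_exp_neg_mul_sq (b := σ ^ 2) (by positivity)).mul_const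
    (√(σ * √(2 / π)))).congr (.of_forall fun t => ?_)
  simp only [gaussWeight, neg_mul]

@[fun_prop]
lemma continuous_gaussWeight (σ : ℝ) : Continuous (gaussWeight σ) := by
  unfold gaussWeight
  fun_prop

lemma gaussWeight_nonneg (σ t : ℝ) : 0 ≤ gaussWeight σ t := by
  unfold gaussWeight
  positivity

lemma integral_gaussWeight (σ : ℝ) : ∫ t, gaussWeight σ t = √(π / σ ^ 2) * √(σ * √(2 / π)) := by
  simp only [gaussWeight, integral_mul_const, ← neg_mul, integral_gaussian]

lemma integral_gaussWeight_div_sqrt_two_pi (hσ : 0 < σ) :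
    (√(2 * π))⁻¹ * ∫ t, gaussWeight σ t = (√(σ * √(2 * π)))⁻¹ := by
  have hπ := Real.pi_pos
  rw [integral_gaussWeight, ← Real.sqrt_inv, ← Real.sqrt_mul (by positivity),
    ← Real.sqrt_mul (by positivity), ← Real.sqrt_inv, Real.sqrt_div zero_le_two,
    Real.sqrt_mul zero_le_two]
  have : 0 < √π := Real.sqrt_pos.2 hπ
  congr 1
  field_simp
  exact Real.sq_sqrt zero_le_two

lemma integrable_cexp_mul_gaussWeight (hσ : σ ≠ 0) (ξ : ℝ) :
    Integrable fun t : ℝ => Complex.exp (-(I * ξ * t)) * (gaussWeight σ t : ℂ) :=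
  (integrable_gaussWeight hσ).ofReal.bdd_mul (c := 1) (by fun_prop)
    (.of_forall fun t => by simp [Complex.norm_exp])

lemma gaussWeightFourier_eq (hσ : σ ≠ 0) (ξ : ℝ) :
    gaussWeightFourier σ ξ = √(σ * √(2 / π)) * ((π / σ ^ 2 : ℂ) ^ (1 / 2 : ℂ) *
      Complex.exp (-ξ ^ 2 / (4 * σ ^ 2))) := by
  have hre : 0 < ((σ : ℂ) ^ 2).re := by
    rw [← Complex.ofReal_pow, Complex.ofReal_re]
    positivity
  have hintegrand (t : ℝ) : Complex.exp (-(I * ξ * t)) * (gaussWeight σ t : ℂ) =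
      √(σ * √(2 / π)) * (Complex.exp (I * (-ξ : ℝ) * t) * Complex.exp (-(σ : ℂ) ^ 2 * t ^ 2)) := by
    simp only [gaussWeight, Complex.ofReal_mul, Complex.ofReal_exp]
    push_cast
    ring_nf
  simp only [gaussWeightFourier, hintegrand, integral_const_mul, fourierIntegral_gaussian hre]
  push_cast
  ring_nf

lemma gaussWeightFourier_shift (hσ : σ ≠ 0) (β ω ν : ℝ) :
    Complex.exp (β * ν) * gaussWeightFourier σ (ω - ν) =
      Complex.exp ((σ ^ 2 * β ^ 2 + β * ω : ℝ) : ℂ) *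
        gaussWeightFourier σ (ω + 2 * σ ^ 2 * β - ν) := by
  rw [gaussWeightFourier_eq hσ, gaussWeightFourier_eq hσ, mul_left_comm, mul_left_comm _ (√_ : ℂ),
    mul_left_comm (Complex.exp _), mul_left_comm (Complex.exp _), ← Complex.exp_add,
    ← Complex.exp_add]
  congr 3
  have : (σ : ℂ) ≠ 0 := by exact_mod_cast hσ
  field_simp
  push_cast
  ring

end GaussWeight

namespace Matrix.IsHermitian

variable {m : ℕ} {H : Matrix (Fin m) (Fin m) ℂ} {σ : ℝ}

lemma norm_oftInt_integrand (hH : H.IsHermitian) (A : Matrix (Fin m) (Fin m) ℂ) (ω t : ℝ) :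
    ‖(Complex.exp (-(I * ω * t)) * (gaussWeight σ t : ℂ)) •
      (NormedSpace.exp ((I * t) • H) * A * NormedSpace.exp ((-(I * t)) • H))‖ =
      gaussWeight σ t * ‖A‖ := by
  rw [norm_smul, hH.norm_exp_I_mul_smul_mul_mul_exp_neg, norm_mul, Complex.norm_exp,
    Complex.norm_real, Real.norm_of_nonneg (gaussWeight_nonneg σ t)]
  simp

lemma integrable_oftInt_integrand (hH : H.IsHermitian) (A : Matrix (Fin m) (Fin m) ℂ)
    (hσ : σ ≠ 0) (ω : ℝ) :
    Integrable fun t : ℝ => (Complex.exp (-(I * ω * t)) * (gaussWeight σ t : ℂ)) •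
      (NormedSpace.exp ((I * t) • H) * A * NormedSpace.exp ((-(I * t)) • H)) := by
  let _ : NormedAlgebra ℚ (Matrix (Fin m) (Fin m) ℂ) := .restrictScalars ℚ ℂ _
  exact ((integrable_gaussWeight hσ).mul_const ‖A‖).mono'
    (by fun_prop : Continuous _).aestronglyMeasurable
    (.of_forall fun t => (norm_oftInt_integrand hH A ω t).le)

lemma norm_oftInt_le (hH : H.IsHermitian) (A : Matrix (Fin m) (Fin m) ℂ) (hσ : 0 < σ) (ω : ℝ) :
    ‖oftInt H A σ ω‖ ≤ ‖A‖ / √(σ * √(2 * π)) := by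
  have hintegral : ‖∫ t : ℝ, (Complex.exp (-(I * ω * t)) * (gaussWeight σ t : ℂ)) •
      (NormedSpace.exp ((I * t) • H) * A * NormedSpace.exp ((-(I * t)) • H))‖ ≤
      (∫ t, gaussWeight σ t) * ‖A‖ := by
    rw [← integral_mul_const]
    exact norm_integral_le_of_norm_le ((integrable_gaussWeight hσ.ne').mul_const _)
      (.of_forall fun t => (norm_oftInt_integrand hH A ω t).le)
  calc ‖oftInt H A σ ω‖
      ≤ (√(2 * π))⁻¹ * ((∫ t, gaussWeight σ t) * ‖A‖) := by
        rw [oftInt, norm_smul, norm_inv, Complex.norm_real, Real.norm_of_nonneg (by positivity)]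
        gcongr
    _ = ‖A‖ / √(σ * √(2 * π)) := by
        rw [← mul_assoc, integral_gaussWeight_div_sqrt_two_pi hσ, inv_mul_eq_div]

lemma toEigenbasis_oftInt (hH : H.IsHermitian) (A : Matrix (Fin m) (Fin m) ℂ) (hσ : σ ≠ 0)
    (ω : ℝ) :
    hH.toEigenbasis (oftInt H A σ ω) = of fun j k => ((√(2 * π) : ℂ))⁻¹ *
      gaussWeightFourier σ (ω - (hH.eigenvalues j - hH.eigenvalues k)) * hH.toEigenbasis A j k := by
  have hintegrand (j k : Fin m) (t : ℝ) :
      hH.toEigenbasis ((Complex.exp (-(I * ω * t)) * (gaussWeight σ t : ℂ)) •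
        (NormedSpace.exp ((I * t) • H) * A * NormedSpace.exp ((-(I * t)) • H))) j k =
      Complex.exp (-(I * (ω - (hH.eigenvalues j - hH.eigenvalues k) : ℝ) * t)) *
        (gaussWeight σ t : ℂ) * hH.toEigenbasis A j k := by
    rw [map_smul, toEigenbasis_exp_smul_mul_mul_exp_neg_smul, smul_apply, of_apply, smul_eq_mul]
    have hphase : Complex.exp (-(I * ω * t)) *
        Complex.exp (I * t * (hH.eigenvalues j - hH.eigenvalues k)) =
        Complex.exp (-(I * (ω - (hH.eigenvalues j - hH.eigenvalues k) : ℝ) * t)) := by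
      rw [← Complex.exp_add]
      push_cast
      ring_nf
    linear_combination (gaussWeight σ t * hH.toEigenbasis A j k : ℂ) * hphase
  have hentry (j k : Fin m) : hH.toEigenbasis (∫ t : ℝ, (Complex.exp (-(I * ω * t)) *
      (gaussWeight σ t : ℂ)) • (NormedSpace.exp ((I * t) • H) * A *
        NormedSpace.exp ((-(I * t)) • H))) j k =
      ∫ t : ℝ, Complex.exp (-(I * (ω - (hH.eigenvalues j - hH.eigenvalues k) : ℝ) * t)) *
        (gaussWeight σ t : ℂ) * hH.toEigenbasis A j k :=
    (((entryLinearMap ℂ ℂ j k).comp hH.toEigenbasis.toAlgEquiv.toLinearMap).toContinuousLinearMap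
      |>.integral_comp_comm (integrable_oftInt_integrand hH A hσ ω)).symm.trans
      (integral_congr_ae (.of_forall (hintegrand j k)))
  ext j k
  rw [oftInt, map_smul, smul_apply, hentry, integral_mul_const, of_apply, smul_eq_mul,
    gaussWeightFourier, mul_assoc]

lemma exp_smul_mul_oftInt_mul_exp_neg_smul (hH : H.IsHermitian) (A : Matrix (Fin m) (Fin m) ℂ)
    (hσ : σ ≠ 0) (β ω : ℝ) :
    NormedSpace.exp ((β : ℂ) • H) * oftInt H A σ ω * NormedSpace.exp ((-(β : ℂ)) • H) =
      Complex.exp ((σ ^ 2 * β ^ 2 + β * ω : ℝ) : ℂ) • oftInt H A σ (ω + 2 * σ ^ 2 * β) := by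
  apply EquivLike.injective hH.toEigenbasis
  rw [toEigenbasis_exp_smul_mul_mul_exp_neg_smul, map_smul, toEigenbasis_oftInt hH A hσ,
    toEigenbasis_oftInt hH A hσ]
  ext j k
  have hshift := gaussWeightFourier_shift hσ β ω (hH.eigenvalues j - hH.eigenvalues k)
  simp only [of_apply, smul_apply, smul_eq_mul]
  push_cast at hshift ⊢
  linear_combination ((√(2 * π) : ℂ)⁻¹ * hH.toEigenbasis A j k) * hshift

end Matrix.IsHermitian

/-- **Norm bound on imaginary-time conjugation of the operator Fourier transform:**
for Hermitian `H` and `‖A‖ ≤ 1`,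
`‖e^{βH} Â_H(ω) e^{-βH}‖ ≤ e^{σ²β²} e^{βω} / √(σ√(2π))`. -/
theorem norm_exp_conj_oft_le {m : ℕ} (H A : Matrix (Fin m) (Fin m) ℂ)
    (hH : H.IsHermitian) (hA : ‖A‖ ≤ 1) (σ : ℝ) (hσ : 0 < σ) (β ω : ℝ) :
    ‖NormedSpace.exp ((β : ℂ) • H) * oftInt H A σ ω *
        NormedSpace.exp ((-(β : ℂ)) • H)‖ ≤
      Real.exp (σ ^ 2 * β ^ 2) * Real.exp (β * ω) / Real.sqrt (σ * Real.sqrt (2 * π)) := by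
  calc _ = Real.exp (σ ^ 2 * β ^ 2 + β * ω) * ‖oftInt H A σ (ω + 2 * σ ^ 2 * β)‖ := by
        rw [hH.exp_smul_mul_oftInt_mul_exp_neg_smul A hσ.ne', norm_smul, Complex.norm_exp,
          Complex.ofReal_re]
    _ ≤ Real.exp (σ ^ 2 * β ^ 2 + β * ω) * (1 / √(σ * √(2 * π))) := by
        gcongr
        exact (hH.norm_oftInt_le A hσ _).trans (by gcongr)
    _ = _ := by rw [Real.exp_add, mul_one_div]
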